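/- The q-measure operator satisfies grade-2 additivity: if A, B, C ∈ 𝒜 are mutually disjoint, then μ̂(A∪B∪C) = μ̂(A∪B) + μ̂(A∪C) + μ̂(B∪C) − μ̂(A) − μ̂(B) − μ̂(C). -/
import Mathlib

open MeasureTheory ContinuousLinearMap

noncomputable section

variable {Ω : Type*} [MeasurableSpace Ω]

/-- The characteristic function `χ_A` as an element of `L²(Ω, 𝒜, ν)`. -/
def chi (ν : Measure Ω) [IsFiniteMeasure ν] {A : Set Ω} (hA : MeasurableSet A) : Lp ℂ 2 ν :=
  indicatorConstLp 2 hA (measure_ne_top ν A) (1 : ℂ)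

/-- The decoherence operator `D(A,B) = |χ_B⟩⟨χ_A|`, i.e. `D(A,B) f = ⟨χ_A, f⟩ χ_B`. -/
def Dop (ν : Measure Ω) [IsFiniteMeasure ν] {A B : Set Ω} (hA : MeasurableSet A)
    (hB : MeasurableSet B) : Lp ℂ 2 ν →L[ℂ] Lp ℂ 2 ν :=
  (innerSL ℂ (chi ν hA)).smulRight (chi ν hB)

lemma chi_union (ν : Measure Ω) [IsFiniteMeasure ν] {A B : Set Ω} (hA : MeasurableSet A)
    (hB : MeasurableSet B) (hAB : A ∩ B = ∅) :
    chi ν (hA.union hB) = chi ν hA + chi ν hB := by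
  simpa [chi] using indicatorConstLp_disjoint_union (p := 2) (μ := ν) hA hB
    (measure_ne_top ν A) (measure_ne_top ν B) (Set.disjoint_iff_inter_eq_empty.2 hAB) (1 : ℂ)

theorem stmt5 (ν : Measure Ω) [IsProbabilityMeasure ν] {A B C : Set Ω}
    (hA : MeasurableSet A) (hB : MeasurableSet B) (hC : MeasurableSet C)
    (hAB : A ∩ B = ∅) (hAC : A ∩ C = ∅) (hBC : B ∩ C = ∅) :
    Dop ν ((hA.union hB).union hC) ((hA.union hB).union hC) =
      Dop ν (hA.union hB) (hA.union hB) + Dop ν (hA.union hC) (hA.union hC) +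
        Dop ν (hB.union hC) (hB.union hC) - Dop ν hA hA - Dop ν hB hB - Dop ν hC hC := by
  have hABC : (A ∪ B) ∩ C = ∅ := by
    rw [Set.union_inter_distrib_right, hAC, hBC, Set.union_empty]
  have e1 := chi_union ν (hA.union hB) hC hABC
  have e2 := chi_union ν hA hB hAB
  have e3 := chi_union ν hA hC hAC
  have e4 := chi_union ν hB hC hBC
  refine ContinuousLinearMap.ext fun f => ?_
  simp only [Dop, smulRight_apply, innerSL_apply_apply, add_apply, sub_apply, e1, e2, e3, e4]
  simp only [inner_add_left, add_smul, smul_add]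
  abel
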